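/- Consider long range percolation on ℤ with translation-invariant edge probabilities (b_k)_{k≥1} ⊂ [0,1) satisfying ∑_{k≥1} k·b_k < ∞. Then almost surely there exist infinitely many cut-points, and consequently there is almost surely no infinite connected component. -/

import Mathlib

open MeasureTheory ProbabilityTheory
open scoped ENNReal

/-- The open cluster of `x`: all vertices reachable from `x` through open edges. -/
def percClusterZ {Ω : Type*} (w : Sym2 ℤ → Ω → Bool) (ω : Ω) (x : ℤ) : Set ℤ :=
  {y | Relation.ReflTransGen (fun a c => a ≠ c ∧ w (s(a, c)) ω = true) x y}

open Finset Filter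
open scoped Topology
set_option maxHeartbeats 1000000

namespace Stmt9

/-- Pairs `(ℓ, j)` with `j < ℓ ≤ N`, indexing edges of length `ℓ` at offset `j`. -/
def pairsBelow (N : ℕ) : Finset (ℕ × ℕ) :=
  ((Finset.range (N+1)) ×ˢ (Finset.range (N+1))).filter fun p => p.2 < p.1

lemma mem_pairsBelow {N : ℕ} {p : ℕ × ℕ} : p ∈ pairsBelow N ↔ p.2 < p.1 ∧ p.1 ≤ N := by
  simp only [pairsBelow, Finset.mem_filter, Finset.mem_product, Finset.mem_range]
  omega

lemma pairsBelow_eq_biUnion (N : ℕ) :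
    pairsBelow N = (Finset.range (N+1)).biUnion
      (fun ℓ => (Finset.range ℓ).image fun j => (ℓ, j)) := by
  ext p
  simp only [mem_pairsBelow, Finset.mem_biUnion, Finset.mem_image, Finset.mem_range]
  constructor
  · rintro ⟨h1, h2⟩
    exact ⟨p.1, by omega, p.2, h1, rfl⟩
  · rintro ⟨ℓ, hℓ, j, hj, rfl⟩
    exact ⟨hj, by omega⟩

lemma prod_pairsBelow {M : Type*} [CommMonoid M] (N : ℕ) (f : ℕ → M) :
    ∏ p ∈ pairsBelow N, f p.1 = ∏ ℓ ∈ Finset.range (N+1), f ℓ ^ ℓ := by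
  rw [pairsBelow_eq_biUnion, Finset.prod_biUnion]
  · refine Finset.prod_congr rfl fun ℓ _ => ?_
    rw [Finset.prod_image (by intro a _ b _ h; simpa using h)]
    simp
  · intro a _ b _ hab
    simp only [Finset.disjoint_left, Finset.mem_image, Finset.mem_range]
    rintro x ⟨j, _, rfl⟩ ⟨j', _, h⟩
    exact hab (by simpa using congrArg Prod.fst h.symm)

lemma sum_pairsBelow (N : ℕ) (f : ℕ → ℝ) :
    ∑ p ∈ pairsBelow N, f p.1 = ∑ ℓ ∈ Finset.range (N+1), (ℓ : ℝ) * f ℓ := by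
  rw [pairsBelow_eq_biUnion, Finset.sum_biUnion]
  · refine Finset.sum_congr rfl fun ℓ _ => ?_
    rw [Finset.sum_image (by intro a _ b _ h; simpa using h)]
    simp [mul_comm]
  · intro a _ b _ hab
    simp only [Finset.disjoint_left, Finset.mem_image, Finset.mem_range]
    rintro x ⟨j, _, rfl⟩ ⟨j', _, h⟩
    exact hab (by simpa using congrArg Prod.fst h.symm)

lemma exp_le_one_sub {t : ℝ} (h0 : 0 ≤ t) (h2 : t ≤ 1/2) : Real.exp (-(2*t)) ≤ 1 - t := by
  have h1 := Real.add_one_le_exp (2*t)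
  have h3 : Real.exp (-(2*t)) * Real.exp (2*t) = 1 := by
    rw [← Real.exp_add]; simp
  nlinarith [Real.exp_pos (-(2*t)), Real.exp_pos (2*t)]

lemma prod_subset_ge {ι : Type*} [DecidableEq ι] {s t : Finset ι} (h : s ⊆ t) (f : ι → ℝ)
    (h0 : ∀ i, 0 ≤ f i) (h1 : ∀ i, f i ≤ 1) : ∏ i ∈ t, f i ≤ ∏ i ∈ s, f i := by
  rw [← Finset.prod_sdiff h]
  have h2 : ∏ i ∈ t \ s, f i ≤ 1 := Finset.prod_le_one (fun i _ => h0 i) (fun i _ => h1 i)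
  have h3 : 0 ≤ ∏ i ∈ s, f i := Finset.prod_nonneg fun i _ => h0 i
  have h4 : 0 ≤ ∏ i ∈ t \ s, f i := Finset.prod_nonneg fun i _ => h0 i
  nlinarith

lemma prod_lb (a : ℕ → ℝ) (ha0 : ∀ k, 0 ≤ a k) (ha1 : ∀ k, a k < 1)
    (hsum : Summable fun k : ℕ => (k : ℝ) * a k) :
    ∃ c : ℝ, 0 < c ∧ ∀ N, c ≤ ∏ p ∈ pairsBelow N, (1 - a p.1) := by
  -- find L beyond which a ℓ ≤ 1/2
  obtain ⟨L, hL⟩ : ∃ L : ℕ, ∀ ℓ : ℕ, L < ℓ → a ℓ ≤ 1/2 := by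
    have h0 := hsum.tendsto_atTop_zero
    have h1 : ∀ᶠ ℓ : ℕ in atTop, (ℓ : ℝ) * a ℓ < 1/2 :=
      h0.eventually (gt_mem_nhds (by norm_num))
    obtain ⟨L, hL⟩ := eventually_atTop.1 h1
    refine ⟨L, fun ℓ hℓ => ?_⟩
    have h2 := hL ℓ (le_of_lt hℓ)
    have h3 : (1 : ℝ) ≤ (ℓ : ℝ) := by
      have : 1 ≤ ℓ := by omega
      exact_mod_cast this
    nlinarith [ha0 ℓ]
  set T := ∑' k : ℕ, (k : ℝ) * a k with hT
  have hTle : ∀ N : ℕ, ∑ ℓ ∈ Finset.range N, (ℓ : ℝ) * a ℓ ≤ T :=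
    fun N => Summable.sum_le_tsum _ (fun k _ => mul_nonneg (by positivity) (ha0 k)) hsum
  refine ⟨(∏ ℓ ∈ Finset.range (L+1), (1 - a ℓ)^ℓ) * Real.exp (-(2*T)), ?_, ?_⟩
  · apply mul_pos
    · exact Finset.prod_pos fun ℓ _ => pow_pos (by linarith [ha1 ℓ]) ℓ
    · exact Real.exp_pos _
  intro N
  rw [← Finset.prod_filter_mul_prod_filter_not (pairsBelow N) (fun p => p.1 ≤ L)]
  have hpart1 : ∏ ℓ ∈ Finset.range (L+1), (1 - a ℓ)^ℓ ≤
      ∏ p ∈ (pairsBelow N).filter (fun p => p.1 ≤ L), (1 - a p.1) := by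
    rw [← prod_pairsBelow]
    apply prod_subset_ge
    · intro p hp
      rw [Finset.mem_filter] at hp
      rw [mem_pairsBelow] at hp ⊢
      rcases hp with ⟨⟨h1, _⟩, h2⟩
      exact ⟨h1, h2⟩
    · intro p; have := ha1 p.1; linarith [ha0 p.1]
    · intro p; linarith [ha0 p.1]
  have hpart2 : Real.exp (-(2*T)) ≤
      ∏ p ∈ (pairsBelow N).filter (fun p => ¬ p.1 ≤ L), (1 - a p.1) := by
    have hS : ∑ p ∈ (pairsBelow N).filter (fun p => ¬ p.1 ≤ L), a p.1 ≤ T := by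
      calc ∑ p ∈ (pairsBelow N).filter (fun p => ¬ p.1 ≤ L), a p.1
          ≤ ∑ p ∈ pairsBelow N, a p.1 :=
            Finset.sum_le_sum_of_subset_of_nonneg (Finset.filter_subset _ _)
              (fun p _ _ => ha0 p.1)
        _ = ∑ ℓ ∈ Finset.range (N+1), (ℓ : ℝ) * a ℓ := sum_pairsBelow N a
        _ ≤ T := hTle (N+1)
    calc Real.exp (-(2*T))
        ≤ Real.exp (-(2 * ∑ p ∈ (pairsBelow N).filter (fun p => ¬ p.1 ≤ L), a p.1)) := by
          apply Real.exp_le_exp.2; nlinarith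
      _ = ∏ p ∈ (pairsBelow N).filter (fun p => ¬ p.1 ≤ L), Real.exp (-(2 * a p.1)) := by
          rw [← Real.exp_sum]
          congr 1
          rw [Finset.mul_sum, ← Finset.sum_neg_distrib]
      _ ≤ ∏ p ∈ (pairsBelow N).filter (fun p => ¬ p.1 ≤ L), (1 - a p.1) := by
          apply Finset.prod_le_prod
          · intro p _; positivity
          · intro p hp
            rw [Finset.mem_filter] at hp
            exact exp_le_one_sub (ha0 p.1) (hL p.1 (by omega))
  have e1 : (0:ℝ) ≤ Real.exp (-(2*T)) := (Real.exp_pos _).le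
  have e2 : (0:ℝ) ≤ ∏ ℓ ∈ Finset.range (L+1), (1 - a ℓ)^ℓ :=
    Finset.prod_nonneg fun ℓ _ => pow_nonneg (by linarith [ha1 ℓ]) ℓ
  have e3 : (0:ℝ) ≤ ∏ p ∈ (pairsBelow N).filter (fun p => p.1 ≤ L), (1 - a p.1) :=
    Finset.prod_nonneg fun p _ => by linarith [ha1 p.1]
  nlinarith

/-- The edge of length `p.1` crossing `q` at offset `p.2`. -/
def edg (q : ℤ) (p : ℕ × ℕ) : Sym2 ℤ := s(q - p.2, q - p.2 + p.1)

lemma meas_false {Ω : Type*} [MeasurableSpace Ω] (μ : Measure Ω) [IsProbabilityMeasure μ]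
    (b : ℕ → ℝ≥0∞) (w : Sym2 ℤ → Ω → Bool) (hmeas : ∀ e, Measurable (w e))
    (hopen : ∀ x y : ℤ, x ≠ y → μ {ω | w (s(x, y)) ω = true} = b (y - x).natAbs)
    (x y : ℤ) (hxy : x ≠ y) :
    μ {ω | w (s(x, y)) ω = false} = 1 - b (y - x).natAbs := by
  have hms : MeasurableSet {ω | w (s(x, y)) ω = true} :=
    hmeas _ (measurableSet_singleton true)
  have hc : {ω | w (s(x, y)) ω = false} = {ω | w (s(x, y)) ω = true}ᶜ := by
    ext ω; simp
  rw [hc, measure_compl hms (measure_ne_top μ _), measure_univ, hopen x y hxy]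

lemma comap_meas {Ω : Type*} [MeasurableSpace Ω] (w : Sym2 ℤ → Ω → Bool) (e : Sym2 ℤ) :
    MeasurableSet[(inferInstance : MeasurableSpace Bool).comap (w e)] {ω | w e ω = false} :=
  ⟨{false}, trivial, rfl⟩

lemma core {Ω : Type*} [MeasurableSpace Ω] (μ : Measure Ω) [IsProbabilityMeasure μ]
    (b : ℕ → ℝ≥0∞) (hb1 : ∀ k, b k < 1)
    (hsum : ∑' k : ℕ, (k : ℝ≥0∞) * b k < ⊤)
    (w : Sym2 ℤ → Ω → Bool) (hmeas : ∀ e, Measurable (w e))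
    (hindep : iIndepFun w μ)
    (hopen : ∀ x y : ℤ, x ≠ y → μ {ω | w (s(x, y)) ω = true} = b (y - x).natAbs)
    (r : ℕ → ℕ)
    (hr : ∀ n, (∑' k : ℕ, if r n < k then (k : ℝ≥0∞) * b k else 0) ≤ 2⁻¹ ^ n)
    (m : ℕ → ℤ)
    (hsep : ∀ i j, i < j → (m i + r i + r j < m j ∨ m j + r j + r i < m i)) :
    ∀ᵐ ω ∂μ, ∃ᶠ n in Filter.atTop,
      ∀ x y : ℤ, x ≤ m n → m n < y → w (s(x, y)) ω = false := by
  classical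
  -- real version of b
  set a : ℕ → ℝ := fun k => (b k).toReal with ha_def
  have hb_ne_top : ∀ k, b k ≠ ⊤ := fun k => ((hb1 k).trans_le le_top).ne
  have ha0 : ∀ k, 0 ≤ a k := fun k => ENNReal.toReal_nonneg
  have ha1 : ∀ k, a k < 1 := by
    intro k
    have := (ENNReal.toReal_lt_toReal (hb_ne_top k) ENNReal.one_ne_top).2 (hb1 k)
    simpa using this
  have hsumA : Summable fun k : ℕ => (k : ℝ) * a k := by
    have h := ENNReal.summable_toReal hsum.ne
    refine h.congr fun k => ?_
    simp [ENNReal.toReal_mul, ha_def]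
  obtain ⟨c, hc0, hc⟩ := prod_lb a ha0 ha1 hsumA
  -- edge sets and cut events
  set E : ℕ → Finset (Sym2 ℤ) := fun n => (pairsBelow (r n)).image (edg (m n)) with hE_def
  set C : ℕ → Set Ω := fun n => ⋂ e ∈ E n, {ω | w e ω = false} with hC_def
  have hedg_inj : ∀ (q : ℤ) (N : ℕ), ∀ p₁ ∈ pairsBelow N, ∀ p₂ ∈ pairsBelow N,
      edg q p₁ = edg q p₂ → p₁ = p₂ := by
    rintro q N ⟨l₁, j₁⟩ h₁ ⟨l₂, j₂⟩ h₂ h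
    rw [mem_pairsBelow] at h₁ h₂
    simp only [edg, Sym2.eq_iff, Prod.mk.injEq, Prod.swap_prod_mk] at h
    simp only [Prod.mk.injEq]
    rcases h with ⟨hA, hB⟩ | ⟨hA, hB⟩ <;> omega
  have hCmeas : ∀ n, MeasurableSet (C n) :=
    fun n => Finset.measurableSet_biInter _ fun e _ => hmeas e (measurableSet_singleton false)
  have hmuC : ∀ n, μ (C n) = ∏ p ∈ pairsBelow (r n), (1 - b p.1) := by
    intro n
    rw [hC_def]
    rw [hindep.meas_biInter (fun e _ => comap_meas w e)]
    rw [Finset.prod_image (hedg_inj (m n) (r n))]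
    refine Finset.prod_congr rfl fun p hp => ?_
    rw [mem_pairsBelow] at hp
    have hne : (m n - p.2 : ℤ) ≠ m n - p.2 + p.1 := by omega
    rw [show edg (m n) p = s(m n - p.2, m n - p.2 + p.1) from rfl]
    rw [meas_false μ b w hmeas hopen _ _ hne]
    have harg : ((m n - (p.2:ℤ) + p.1 - (m n - (p.2:ℤ))).natAbs) = p.1 := by omega
    rw [harg]
  have hCge : ∀ n, ENNReal.ofReal c ≤ μ (C n) := by
    intro n
    rw [hmuC n]
    have heach : ∀ p ∈ pairsBelow (r n), (1 : ℝ≥0∞) - b p.1 = ENNReal.ofReal (1 - a p.1) := by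
      intro p _
      rw [ENNReal.ofReal_sub 1 (ha0 p.1), ENNReal.ofReal_one, ha_def,
        ENNReal.ofReal_toReal (hb_ne_top p.1)]
    rw [Finset.prod_congr rfl heach,
      ← ENNReal.ofReal_prod_of_nonneg (fun p _ => by linarith [ha1 p.1])]
    exact ENNReal.ofReal_le_ofReal (hc (r n))
  -- disjointness of edge groups
  have hEdisj : ∀ i j, i ≠ j → Disjoint (E i) (E j) := by
    intro i j hij
    rw [Finset.disjoint_left]
    rintro e he₁ he₂
    rw [hE_def] at he₁ he₂
    simp only [Finset.mem_image] at he₁ he₂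
    obtain ⟨p, hp, rfl⟩ := he₁
    obtain ⟨p', hp', he⟩ := he₂
    rw [mem_pairsBelow] at hp hp'
    simp only [edg, Sym2.eq_iff, Prod.mk.injEq, Prod.swap_prod_mk] at he
    rcases Nat.lt_or_ge i j with hlt | hge
    · rcases hsep i j hlt with hs | hs <;>
        (rcases he with ⟨hA, hB⟩ | ⟨hA, hB⟩ <;> omega)
    · have hlt : j < i := by omega
      rcases hsep j i hlt with hs | hs <;>
        (rcases he with ⟨hA, hB⟩ | ⟨hA, hB⟩ <;> omega)
  -- independence of cut events
  have hmeasInter : ∀ (t : Finset ℕ), μ (⋂ i ∈ t, C i) = ∏ i ∈ t, μ (C i) := by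
    intro t
    have h1 : (⋂ i ∈ t, C i) = ⋂ e ∈ t.biUnion E, {ω | w e ω = false} :=
      (Finset.set_biInter_biUnion t E _).symm
    rw [h1, hindep.meas_biInter (fun e _ => comap_meas w e),
      Finset.prod_biUnion (fun i _ j _ hij => hEdisj i j hij)]
    exact Finset.prod_congr rfl fun i _ =>
      (hindep.meas_biInter (fun e _ => comap_meas w e)).symm
  have hindepC : iIndepSet C μ := by
    refine iIndepSets.iIndepSet_of_mem (π := fun n => {C n}) (fun n => rfl) hCmeas ?_
    rw [iIndepSets_iff]
    intro s f hf
    have hfC : ∀ i ∈ s, f i = C i := hf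
    have h2 : (⋂ i ∈ s, f i) = ⋂ i ∈ s, C i := Set.iInter₂_congr hfC
    rw [h2, hmeasInter s]
    exact Finset.prod_congr rfl fun i hi => by rw [hfC i hi]
  -- the long-edge events
  set D : ℕ → Set Ω := fun n =>
    {ω | ∃ x y : ℤ, x ≤ m n ∧ m n < y ∧ (r n : ℤ) < y - x ∧ w (s(x, y)) ω = true}
    with hD_def
  have hmuD : ∀ n, μ (D n) ≤ 2⁻¹ ^ n := by
    intro n
    have hsub : D n ⊆ ⋃ p : ℕ × ℕ,
        {ω | (r n < p.1 ∧ p.2 < p.1) ∧ w (edg (m n) p) ω = true} := by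
      rintro ω ⟨x, y, hx, hy, hrn, hw⟩
      refine Set.mem_iUnion.2 ⟨((y - x).toNat, (m n - x).toNat), ⟨by omega, by omega⟩, ?_⟩
      have hpair : ((m n : ℤ) - ((m n - x).toNat : ℤ),
          (m n : ℤ) - ((m n - x).toNat : ℤ) + ((y - x).toNat : ℤ)) = (x, y) := by
        simp only [Prod.mk.injEq]; omega
      show w (edg (m n) _) ω = true
      rw [show edg (m n) ((y - x).toNat, (m n - x).toNat)
          = s((m n : ℤ) - ((m n - x).toNat : ℤ),
            (m n : ℤ) - ((m n - x).toNat : ℤ) + ((y - x).toNat : ℤ)) from rfl, Sym2.eq_iff.2 (Or.inl (Prod.mk.inj hpair))]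
      exact hw
    refine le_trans (le_trans (measure_mono hsub) (measure_iUnion_le _)) ?_
    have hbound : ∀ p : ℕ × ℕ,
        μ {ω | (r n < p.1 ∧ p.2 < p.1) ∧ w (edg (m n) p) ω = true}
          ≤ if r n < p.1 ∧ p.2 < p.1 then b p.1 else 0 := by
      intro p
      by_cases h : r n < p.1 ∧ p.2 < p.1
      · rw [if_pos h]
        have hne : (m n - p.2 : ℤ) ≠ m n - p.2 + p.1 := by omega
        have := hopen (m n - p.2) (m n - p.2 + p.1) hne
        calc μ {ω | (r n < p.1 ∧ p.2 < p.1) ∧ w (edg (m n) p) ω = true}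
            ≤ μ {ω | w (edg (m n) p) ω = true} := measure_mono fun ω hω => hω.2
          _ = b p.1 := by
              rw [show edg (m n) p = s(m n - p.2, m n - p.2 + p.1) from rfl, this]
              congr 1
              omega
      · rw [if_neg h]
        have : {ω : Ω | (r n < p.1 ∧ p.2 < p.1) ∧ w (edg (m n) p) ω = true} = ∅ := by
          ext ω; simp only [Set.mem_setOf_eq, Set.mem_empty_iff_false, iff_false]
          rintro ⟨h', _⟩; exact h h'
        rw [this]; simp
    refine le_trans (ENNReal.tsum_le_tsum hbound) ?_
    rw [ENNReal.tsum_prod']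
    have hinner : ∀ ℓ : ℕ, (∑' j : ℕ, if r n < ℓ ∧ j < ℓ then b ℓ else 0)
        = if r n < ℓ then (ℓ : ℝ≥0∞) * b ℓ else 0 := by
      intro ℓ
      by_cases hℓ : r n < ℓ
      · rw [if_pos hℓ]
        rw [tsum_eq_sum (s := Finset.range ℓ)
          (fun j hj => by rw [if_neg]; rintro ⟨-, hjl⟩; exact hj (Finset.mem_range.2 hjl))]
        rw [Finset.sum_congr rfl (fun j hj => if_pos ⟨hℓ, Finset.mem_range.1 hj⟩)]
        rw [Finset.sum_const, Finset.card_range, nsmul_eq_mul]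
      · rw [if_neg hℓ]
        simp [hℓ]
    rw [tsum_congr hinner]
    exact hr n
  -- Borel-Cantelli
  have hCsum : (∑' n, μ (C n)) = ⊤ := by
    have h1 : (∑' _ : ℕ, ENNReal.ofReal c) ≤ ∑' n, μ (C n) :=
      ENNReal.tsum_le_tsum hCge
    rw [ENNReal.tsum_const_eq_top_of_ne_zero
      (by simpa using (ENNReal.ofReal_pos.2 hc0).ne')] at h1
    exact top_le_iff.1 h1
  have hBC2 : μ (limsup C atTop) = 1 := measure_limsup_eq_one hCmeas hindepC hCsum
  have hDsum : (∑' n, μ (D n)) ≠ ⊤ := by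
    refine ne_top_of_le_ne_top ?_ (ENNReal.tsum_le_tsum hmuD)
    rw [ENNReal.tsum_geometric, ENNReal.one_sub_inv_two]
    simp
  have hBC1 : μ (limsup D atTop) = 0 := measure_limsup_atTop_eq_zero hDsum
  have h1 : ∀ᵐ ω ∂μ, ω ∈ limsup C atTop := by
    have hms : MeasurableSet (limsup C atTop) := .measurableSet_limsup hCmeas
    have : μ (limsup C atTop)ᶜ = 0 := by
      rw [measure_compl hms (measure_ne_top μ _), hBC2, measure_univ, tsub_self]
    exact (ae_iff.2 this)
  have h2 : ∀ᵐ ω ∂μ, ω ∉ limsup D atTop := measure_eq_zero_iff_ae_notMem.1 hBC1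
  filter_upwards [h1, h2] with ω hω1 hω2
  rw [mem_limsup_iff_frequently_mem] at hω1
  have hev : ∀ᶠ n in atTop, ω ∉ D n := by
    rw [← Filter.not_frequently]
    exact fun h => hω2 (mem_limsup_iff_frequently_mem.2 h)
  refine (hω1.and_eventually hev).mono ?_
  rintro n ⟨hC', hD'⟩ x y hx hy
  rcases le_or_gt (y - x) (r n) with hle | hlt
  · have hp : ((y - x).toNat, (m n - x).toNat) ∈ pairsBelow (r n) :=
      mem_pairsBelow.2 ⟨by omega, by omega⟩
    have hpair : ((m n : ℤ) - ((m n - x).toNat : ℤ),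
        (m n : ℤ) - ((m n - x).toNat : ℤ) + ((y - x).toNat : ℤ)) = (x, y) := by
      simp only [Prod.mk.injEq]; omega
    have hin : s(x, y) ∈ E n := by
      rw [hE_def]
      refine Finset.mem_image.2 ⟨_, hp, ?_⟩
      rw [show edg (m n) ((y - x).toNat, (m n - x).toNat)
          = s((m n : ℤ) - ((m n - x).toNat : ℤ),
            (m n : ℤ) - ((m n - x).toNat : ℤ) + ((y - x).toNat : ℤ)) from rfl, Sym2.eq_iff.2 (Or.inl (Prod.mk.inj hpair))]
    have := hC'
    rw [hC_def] at this
    exact Set.mem_iInter₂.1 this _ hin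
  · rcases Bool.eq_false_or_eq_true (w (s(x, y)) ω) with hb | hb
    · exact absurd ⟨x, y, hx, hy, by omega, hb⟩ hD'
    · exact hb

end Stmt9

/-- long range percolation on `ℤ` with `∑ k·b_k < ∞` has almost surely
infinitely many cut-points, and hence no infinite connected component. -/
theorem stmt_9 {Ω : Type*} [MeasurableSpace Ω] (μ : Measure Ω) [IsProbabilityMeasure μ]
    (b : ℕ → ℝ≥0∞) (hb1 : ∀ k, b k < 1)
    (hsum : ∑' k : ℕ, (k : ℝ≥0∞) * b k < ⊤)
    (w : Sym2 ℤ → Ω → Bool) (hmeas : ∀ e, Measurable (w e))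
    (hindep : iIndepFun w μ)
    (hopen : ∀ x y : ℤ, x ≠ y → μ {ω | w (s(x, y)) ω = true} = b (y - x).natAbs) :
    ∀ᵐ ω ∂μ,
      {m : ℤ | ∀ x y : ℤ, x ≤ m → m < y → w (s(x, y)) ω = false}.Infinite ∧
      ∀ x : ℤ, (percClusterZ w ω x).Finite := by
  classical
  -- choose truncation radii
  have hchoice : ∀ n : ℕ, ∃ R : ℕ, ∀ R' ≥ R,
      (∑' k : ℕ, ((k + R' : ℕ) : ℝ≥0∞) * b (k + R')) ≤ 2⁻¹ ^ n := by
    intro n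
    have htail : Tendsto (fun i => ∑' k : ℕ, ((k + i : ℕ) : ℝ≥0∞) * b (k + i)) atTop (𝓝 0) :=
      ENNReal.tendsto_sum_nat_add (fun k => (k : ℝ≥0∞) * b k) hsum.ne
    have hpos : (0 : ℝ≥0∞) < 2⁻¹ ^ n := by
      apply ENNReal.pow_pos
      simp
    obtain ⟨R, hR⟩ := eventually_atTop.1 (htail.eventually (gt_mem_nhds hpos))
    exact ⟨R, fun R' h => (hR R' h).le⟩
  choose r hrr using hchoice
  have hr : ∀ n, (∑' k : ℕ, if r n < k then (k : ℝ≥0∞) * b k else 0) ≤ 2⁻¹ ^ n := by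
    intro n
    have heq : (∑' k : ℕ, if r n < k then (k : ℝ≥0∞) * b k else 0)
        = ∑' k : ℕ, ((k + (r n + 1) : ℕ) : ℝ≥0∞) * b (k + (r n + 1)) := by
      refine tsum_eq_tsum_of_ne_zero_bij (fun x => (x : ℕ) + (r n + 1)) ?_ ?_ ?_
      · intro x y hxy
        have : (x : ℕ) + (r n + 1) = (y : ℕ) + (r n + 1) := hxy
        ext
        omega
      · intro k hk
        simp only [Function.mem_support, Set.mem_range] at hk ⊢
        have hRk : r n < k := by
          by_contra h
          rw [if_neg h] at hk
          exact hk rfl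
        have hk' : ((k - (r n + 1) + (r n + 1) : ℕ) : ℝ≥0∞) * b (k - (r n + 1) + (r n + 1)) ≠ 0 := by
          rw [show k - (r n + 1) + (r n + 1) = k from by omega]
          rw [if_pos hRk] at hk
          exact hk
        exact ⟨⟨k - (r n + 1), hk'⟩, by simp; omega⟩
      · intro x
        exact if_pos (by omega : r n < (x : ℕ) + (r n + 1))
    rw [heq]
    exact hrr n (r n + 1) (by omega)
  -- positions
  set M : ℕ → ℤ := fun n => (n : ℤ) + 2 * (∑ i ∈ Finset.range n, (r i : ℤ)) + (r n : ℤ)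
    with hM_def
  have hMd : ∀ i j, i < j → M i + r i + r j < M j := by
    intro i j hij
    have h1 : ∑ t ∈ Finset.range i, (r t : ℤ) + r i ≤ ∑ t ∈ Finset.range j, (r t : ℤ) := by
      rw [← Finset.sum_range_succ]
      apply Finset.sum_le_sum_of_subset_of_nonneg
      · exact Finset.range_subset_range.2 (by omega)
      · intro t _ _; positivity
    have h2 : (i : ℤ) < j := by exact_mod_cast hij
    simp only [hM_def]
    omega
  have hMge : ∀ n : ℕ, (n : ℤ) ≤ M n := by
    intro n
    have h1 : (0 : ℤ) ≤ ∑ i ∈ Finset.range n, (r i : ℤ) :=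
      Finset.sum_nonneg fun i _ => by positivity
    simp only [hM_def]
    omega
  have hcore1 := Stmt9.core μ b hb1 hsum w hmeas hindep hopen r hr M
    (fun i j hij => Or.inl (hMd i j hij))
  have hcore2 := Stmt9.core μ b hb1 hsum w hmeas hindep hopen r hr (fun n => -(M n) - 1)
    (fun i j hij => Or.inr (show -(M j) - 1 + (r j : ℤ) + (r i : ℤ) < -(M i) - 1 from by have := hMd i j hij; omega))
  filter_upwards [hcore1, hcore2] with ω hp hm
  have hA : {n : ℕ | ∀ x y : ℤ, x ≤ M n → M n < y → w (s(x, y)) ω = false}.Infinite :=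
    Nat.frequently_atTop_iff_infinite.1 hp
  have hB : {n : ℕ | ∀ x y : ℤ, x ≤ -(M n) - 1 → -(M n) - 1 < y
      → w (s(x, y)) ω = false}.Infinite :=
    Nat.frequently_atTop_iff_infinite.1 hm
  constructor
  · -- infinitely many cut points
    have hsub : M '' {n : ℕ | ∀ x y : ℤ, x ≤ M n → M n < y → w (s(x, y)) ω = false}
        ⊆ {q : ℤ | ∀ x y : ℤ, x ≤ q → q < y → w (s(x, y)) ω = false} := by
      rintro q ⟨n, hn, rfl⟩
      exact hn
    have hinj : Set.InjOn M {n : ℕ | ∀ x y : ℤ, x ≤ M n → M n < y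
        → w (s(x, y)) ω = false} := by
      intro i _ j _ hij
      by_contra hne
      rcases Nat.lt_or_ge i j with h | h
      · have := hMd i j h; omega
      · have h' : j < i := by omega
        have := hMd j i h'; omega
    exact (hA.image hinj).mono hsub
  · -- all clusters are finite
    intro x
    obtain ⟨n₁, hn₁, hgt₁⟩ := hA.exists_gt x.toNat
    obtain ⟨n₂, hn₂, hgt₂⟩ := hB.exists_gt (-x).toNat
    have hx1 : x ≤ M n₁ := by
      have := hMge n₁; have := Int.self_le_toNat x; omega
    have hx2 : -(M n₂) - 1 < x := by
      have := hMge n₂; have := Int.self_le_toNat (-x); omega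
    apply Set.Finite.subset (Set.finite_Icc (-(M n₂)) (M n₁))
    intro y hy
    have hy' : Relation.ReflTransGen
        (fun a c => a ≠ c ∧ w (s(a, c)) ω = true) x y := hy
    clear hy
    induction hy' with
    | refl => exact Set.mem_Icc.2 ⟨by omega, hx1⟩
    | @tail p q hreach hstep ih =>
      obtain ⟨hne, hw⟩ := hstep
      have hpIcc := Set.mem_Icc.1 ih
      rcases lt_or_ge (M n₁) q with hgt | hle1
      · have hfalse := hn₁ p q hpIcc.2 hgt
        rw [hfalse] at hw
        exact absurd hw (by simp)
      rcases lt_or_ge q (-(M n₂)) with hlt2 | hle2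
      · have hfalse := hn₂ q p (by omega) (by omega)
        rw [Sym2.eq_swap] at hfalse
        rw [hfalse] at hw
        exact absurd hw (by simp)
      · exact Set.mem_Icc.2 ⟨hle2, hle1⟩
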